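/- arXiv:2104.13517 — 5 statements merged into one kernel-verified Lean document; each statement's English description precedes it below -/
import Mathlib

section
/- For every γ ≥ 0 and F ≥ 1, one has γ + γ²F/2 + (γ/2)·√(4F + 4γF + γ²F²) ≥ 2γ + γ². Moreover, when F = 1 equality holds for all γ, and when F > 1 and γ > 0 the inequality is strict. -/
/-- For every `γ ≥ 0` and `F ≥ 1`,
`γ + γ²F/2 + (γ/2)·√(4F + 4γF + γ²F²) ≥ 2γ + γ²`; when `F = 1` equality holds for all `γ`,
and when `F > 1` and `γ > 0` the inequality is strict. -/
theorem effective_snr_ge_snr (γ F : ℝ) (hγ : 0 ≤ γ) (hF : 1 ≤ F) :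
    (2 * γ + γ ^ 2 ≤
      γ + γ ^ 2 * F / 2 + (γ / 2) * Real.sqrt (4 * F + 4 * γ * F + γ ^ 2 * F ^ 2)) ∧
    (F = 1 →
      γ + γ ^ 2 * F / 2 + (γ / 2) * Real.sqrt (4 * F + 4 * γ * F + γ ^ 2 * F ^ 2)
        = 2 * γ + γ ^ 2) ∧
    (1 < F → 0 < γ →
      2 * γ + γ ^ 2 <
        γ + γ ^ 2 * F / 2 + (γ / 2) * Real.sqrt (4 * F + 4 * γ * F + γ ^ 2 * F ^ 2)) := by
  have hX : (0:ℝ) ≤ 4 * F + 4 * γ * F + γ ^ 2 * F ^ 2 := by nlinarith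
  set s := Real.sqrt (4 * F + 4 * γ * F + γ ^ 2 * F ^ 2) with hs
  have hsnn : 0 ≤ s := Real.sqrt_nonneg _
  have hsq : s ^ 2 = 4 * F + 4 * γ * F + γ ^ 2 * F ^ 2 := Real.sq_sqrt hX
  have hkey : 2 + 2 * γ - γ * F ≤ s := by
    rcases le_or_gt (2 + 2 * γ - γ * F) 0 with h | h
    · linarith
    · nlinarith [hsq, hsnn, sq_nonneg (s - (2 + 2 * γ - γ * F))]
  refine ⟨by nlinarith, ?_, ?_⟩
  · intro hF1
    subst hF1
    have : s = 2 + γ := by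
      rw [hs, show 4 * (1:ℝ) + 4 * γ * 1 + γ ^ 2 * 1 ^ 2 = (2 + γ) ^ 2 by ring]
      exact Real.sqrt_sq (by linarith)
    rw [this]; ring
  · intro hF1 hγ0
    have hkey' : 2 + 2 * γ - γ * F < s := by
      rcases le_or_gt (2 + 2 * γ - γ * F) 0 with h | h
      · have : 0 < s := Real.sqrt_pos.mpr (by nlinarith)
        linarith
      · nlinarith [hsq, hsnn, sq_nonneg (s - (2 + 2 * γ - γ * F))]
    nlinarith
end

section
/- Fix γ > 0 and F > 1, and for α ∈ ℝ define Λ(α) = (2γ(1+α)(F+α) + γ²(α+F)²)/(α² + 2α + F), the effective SNR of the multiplicative model after the entrywise transformation h_α = -g'/g + α·id when F = F_g. Then Λ attains its maximum over ℝ at α = α_g := (-γF + √(4F + 4γF + γ²F²))/(2(1+γ)), and the maximum value equals λ_g := γ + γ²F/2 + (γ/2)·√(4F + 4γF + γ²F²); i.e. Λ(α) ≤ λ_g for all α, with Λ(α_g) = λ_g. -/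
/-- For `γ > 0`, `F > 1`, the effective SNR
`Λ(α) = (2γ(1+α)(F+α) + γ²(α+F)²)/(α² + 2α + F)` of the multiplicative model after the
entrywise transformation `h_α` attains its maximum over `ℝ` at
`α_g = (-γF + √(4F + 4γF + γ²F²))/(2(1+γ))`, with maximum value
`λ_g = γ + γ²F/2 + (γ/2)√(4F + 4γF + γ²F²)`. -/
theorem optimal_alpha_multiplicative (γ F : ℝ) (hγ : 0 < γ) (hF : 1 < F) :
    (∀ α : ℝ,
      (2 * γ * (1 + α) * (F + α) + γ ^ 2 * (α + F) ^ 2) / (α ^ 2 + 2 * α + F)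
        ≤ γ + γ ^ 2 * F / 2 + (γ / 2) * Real.sqrt (4 * F + 4 * γ * F + γ ^ 2 * F ^ 2)) ∧
    (∀ αg : ℝ,
      αg = (-γ * F + Real.sqrt (4 * F + 4 * γ * F + γ ^ 2 * F ^ 2)) / (2 * (1 + γ)) →
      (2 * γ * (1 + αg) * (F + αg) + γ ^ 2 * (αg + F) ^ 2) / (αg ^ 2 + 2 * αg + F)
        = γ + γ ^ 2 * F / 2 + (γ / 2) * Real.sqrt (4 * F + 4 * γ * F + γ ^ 2 * F ^ 2)) := by
  set s := Real.sqrt (4 * F + 4 * γ * F + γ ^ 2 * F ^ 2) with hs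
  have hSnn : (0:ℝ) ≤ 4 * F + 4 * γ * F + γ ^ 2 * F ^ 2 := by nlinarith
  have hs2 : s ^ 2 = 4 * F + 4 * γ * F + γ ^ 2 * F ^ 2 := Real.sq_sqrt hSnn
  have hsnn : (0:ℝ) ≤ s := Real.sqrt_nonneg _
  have hγ1 : (0:ℝ) < 1 + γ := by linarith
  have hsgt : 2 + γ < s := by
    rw [hs]
    refine (Real.lt_sqrt (by positivity)).mpr ?_
    nlinarith [mul_pos hγ (sub_pos.mpr hF),
      mul_pos (mul_pos hγ hγ) (mul_pos (by linarith : (0:ℝ) < F - 1) (by linarith : (0:ℝ) < F + 1))]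
  have hA : (0:ℝ) < γ * F + s - 2 - 2 * γ := by nlinarith
  have key : ∀ α : ℝ,
      8 * (1 + γ) ^ 2 *
        ((γ + γ ^ 2 * F / 2 + (γ / 2) * s) * (α ^ 2 + 2 * α + F)
          - (2 * γ * (1 + α) * (F + α) + γ ^ 2 * (α + F) ^ 2))
      = γ * (γ * F + s - 2 - 2 * γ) * (2 * (1 + γ) * α + γ * F - s) ^ 2 := by
    intro α
    linear_combination (γ * (4 * (1 + γ) * α + γ * F + 2 + 2 * γ - s)) * hs2
  constructor
  · intro α
    have hD : (0:ℝ) < α ^ 2 + 2 * α + F := by nlinarith [sq_nonneg (α + 1)]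
    rw [div_le_iff₀ hD]
    nlinarith [key α, mul_nonneg (mul_nonneg hγ.le hA.le)
      (sq_nonneg (2 * (1 + γ) * α + γ * F - s)), sq_nonneg (1 + γ), pow_pos hγ1 2]
  · intro αg hαg
    have hD : (0:ℝ) < αg ^ 2 + 2 * αg + F := by nlinarith [sq_nonneg (αg + 1)]
    have hq : 2 * (1 + γ) * αg + γ * F - s = 0 := by
      rw [hαg]; field_simp; ring
    have h0 : 8 * (1 + γ) ^ 2 *
        ((γ + γ ^ 2 * F / 2 + (γ / 2) * s) * (αg ^ 2 + 2 * αg + F)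
          - (2 * γ * (1 + αg) * (F + αg) + γ ^ 2 * (αg + F) ^ 2)) = 0 := by
      rw [key αg, hq]; ring
    have h8 : (8 * (1 + γ) ^ 2 : ℝ) ≠ 0 := by positivity
    have h1 : (γ + γ ^ 2 * F / 2 + (γ / 2) * s) * (αg ^ 2 + 2 * αg + F)
        - (2 * γ * (1 + αg) * (F + αg) + γ ^ 2 * (αg + F) ^ 2) = 0 := by
      exact (mul_eq_zero.mp h0).resolve_left h8
    rw [div_eq_iff hD.ne']
    linarith
end

section
/- Fix γ > 0 and F ≥ 1. Evaluating the effective SNR Λ(α) = (2γ(1+α)(F+α) + γ²(α+F)²)/(α² + 2α + F) at α = √F gives Λ(√F) = γ(1+√F) + (γ²/2)(F + √F), and this satisfies γ(1+√F) + (γ²/2)(F + √F) ≥ 2γ + γ², with strict inequality whenever F > 1. Hence the transformation h_{√F_g} effectively increases the SNR of the multiplicative model whenever the noise is non-Gaussian, without requiring knowledge of γ. -/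
/-- For `γ > 0` and `F ≥ 1`, the effective SNR
`Λ(α) = (2γ(1+α)(F+α) + γ²(α+F)²)/(α² + 2α + F)` evaluated at `α = √F` equals
`γ(1+√F) + (γ²/2)(F + √F)`, and `γ(1+√F) + (γ²/2)(F + √F) ≥ 2γ + γ²`, the inequality being
strict whenever `F > 1`. -/
theorem snr_increase_at_sqrt_fisher (γ F : ℝ) (hγ : 0 < γ) (hF : 1 ≤ F) :
    ((2 * γ * (1 + Real.sqrt F) * (F + Real.sqrt F) + γ ^ 2 * (Real.sqrt F + F) ^ 2)
        / ((Real.sqrt F) ^ 2 + 2 * Real.sqrt F + F)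
      = γ * (1 + Real.sqrt F) + (γ ^ 2 / 2) * (F + Real.sqrt F)) ∧
    (2 * γ + γ ^ 2 ≤ γ * (1 + Real.sqrt F) + (γ ^ 2 / 2) * (F + Real.sqrt F)) ∧
    (1 < F → 2 * γ + γ ^ 2 < γ * (1 + Real.sqrt F) + (γ ^ 2 / 2) * (F + Real.sqrt F)) := by
  have hF0 : (0:ℝ) ≤ F := le_trans zero_le_one hF
  have hs1 : 1 ≤ Real.sqrt F := by
    rw [show (1:ℝ) = Real.sqrt 1 from (Real.sqrt_one).symm]
    exact Real.sqrt_le_sqrt hF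
  have hsq : Real.sqrt F ^ 2 = F := Real.sq_sqrt hF0
  set s := Real.sqrt F with hs
  have hden : s ^ 2 + 2 * s + F = 2 * (F + s) := by rw [hsq]; ring
  have hFs : (0:ℝ) < F + s := by nlinarith
  refine ⟨?_, ?_, ?_⟩
  · rw [hden]
    field_simp
    ring
  · nlinarith
  · intro h1
    have : 1 < s := by
      rw [hs, show (1:ℝ) = Real.sqrt 1 from (Real.sqrt_one).symm]
      exact Real.sqrt_lt_sqrt zero_le_one h1
    nlinarith
end

section
/- Fix d ∈ (0,1], w₄ > 1 and ω ∈ (0,√d), and define m|_{H₀} := (φ̃_ω(2) + φ̃_ω(-2))/4 - τ₀(φ̃_ω)/2 - (w₄-3)·τ₂(φ̃_ω) and m|_{H₁} := m|_{H₀} + Σ_{ℓ=1}^∞ (ω/√d)^ℓ·τ_ℓ(φ̃_ω). Then m|_{H₀} = -(1/2)·log(1 - ω²/d) - (ω²/(2d))(w₄ - 3) and m|_{H₁} = m|_{H₀} - log(1 - ω²/d) + (ω²/d)(2/(w₄-1) - 1); in particular m|_{H₀} < m|_{H₁}. -/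
open MeasureTheory

noncomputable section

/-- Chebyshev coefficients `τ_ℓ(f)`. -/
def tau (ℓ : ℕ) (f : ℝ → ℝ) : ℝ :=
  (1 / Real.pi) * ∫ x in (-2 : ℝ)..2,
    (Polynomial.Chebyshev.T ℝ (ℓ : ℤ)).eval (x / 2) * f x / Real.sqrt (4 - x ^ 2)

/-- The optimal test function `φ_ω`. -/
def phiTest (d w₄ ω : ℝ) (x : ℝ) : ℝ :=
  (ω / d) * (2 / (w₄ - 1) - 1) * x - Real.log ((1 + d / ω) * (1 + ω) - x)

/-- The rescaled test function `φ̃_ω(x) = φ_ω(√d·x + 1 + d)`. -/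
def phiTestTilde (d w₄ ω : ℝ) (x : ℝ) : ℝ := phiTest d w₄ ω (Real.sqrt d * x + 1 + d)

open Real Set intervalIntegral

/-- Change of variables `x = 2 cos θ` for the singular weight. -/
lemma integral_subst_cos (g : ℝ → ℝ) :
    ∫ x in (-2:ℝ)..2, g x / Real.sqrt (4 - x ^ 2)
      = ∫ θ in (0:ℝ)..Real.pi, g (2 * Real.cos θ) := by
  have himg : (fun θ : ℝ => 2 * Real.cos θ) '' Set.Ioo 0 π = Set.Ioo (-2 : ℝ) 2 := by
    ext y
    simp only [Set.mem_image, Set.mem_Ioo]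
    constructor
    · rintro ⟨θ, hθ, rfl⟩
      have h1 : Real.cos θ < 1 := by
        have := Real.strictAntiOn_cos (Set.left_mem_Icc.2 Real.pi_pos.le)
          ⟨hθ.1.le, hθ.2.le⟩ hθ.1
        simpa using this
      have h2 : -1 < Real.cos θ := by
        have := Real.strictAntiOn_cos ⟨hθ.1.le, hθ.2.le⟩
          (Set.right_mem_Icc.2 Real.pi_pos.le) hθ.2
        simpa using this
      constructor <;> nlinarith
    · intro hy
      refine ⟨Real.arccos (y/2), ⟨?_, ?_⟩, ?_⟩
      · exact Real.arccos_pos.2 (by nlinarith [hy.2])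
      · exact lt_of_le_of_ne (Real.arccos_le_pi _)
          (fun h => by have := Real.arccos_eq_pi.1 h; nlinarith [hy.1])
      · rw [Real.cos_arccos (by nlinarith [hy.1]) (by nlinarith [hy.2])]; ring
  have hderiv : ∀ θ ∈ Set.Ioo (0:ℝ) π,
      HasDerivWithinAt (fun θ : ℝ => 2 * Real.cos θ) (-(2 * Real.sin θ)) (Set.Ioo 0 π) θ := by
    intro θ _
    simpa using ((Real.hasDerivAt_cos θ).const_mul 2).hasDerivWithinAt
  have hinj : Set.InjOn (fun θ : ℝ => 2 * Real.cos θ) (Set.Ioo 0 π) := by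
    intro a ha b hb hab
    simp only at hab
    exact Real.injOn_cos ⟨ha.1.le, ha.2.le⟩ ⟨hb.1.le, hb.2.le⟩ (by linarith)
  have key := integral_image_eq_integral_abs_deriv_smul (measurableSet_Ioo)
      hderiv hinj (fun x => g x / Real.sqrt (4 - x ^ 2))
  rw [himg] at key
  rw [intervalIntegral.integral_of_le (by norm_num : (-2:ℝ) ≤ 2),
    intervalIntegral.integral_of_le Real.pi_pos.le,
    MeasureTheory.integral_Ioc_eq_integral_Ioo, MeasureTheory.integral_Ioc_eq_integral_Ioo,
    key]
  refine MeasureTheory.setIntegral_congr_fun measurableSet_Ioo fun θ hθ => ?_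
  have hs : 0 < Real.sin θ := Real.sin_pos_of_pos_of_lt_pi hθ.1 hθ.2
  have hsq : Real.sqrt (4 - (2 * Real.cos θ) ^ 2) = 2 * Real.sin θ := by
    rw [show (4 : ℝ) - (2 * Real.cos θ) ^ 2 = (2 * Real.sin θ)^2 by
      nlinarith [Real.sin_sq_add_cos_sq θ]]
    exact Real.sqrt_sq (by positivity)
  simp only [smul_eq_mul, hsq, abs_of_nonpos (by nlinarith : -(2 * Real.sin θ) ≤ 0)]
  field_simp



lemma integral_cos_int_mul {j : ℝ} (hj : j ≠ 0) (hjint : ∃ m : ℤ, j = m) :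
    ∫ θ in (0:ℝ)..Real.pi, Real.cos (j * θ) = 0 := by
  have h : ∀ θ ∈ Set.uIcc (0:ℝ) Real.pi,
      HasDerivAt (fun t => Real.sin (j * t) / j) (Real.cos (j * θ)) θ := by
    intro θ _
    have := ((Real.hasDerivAt_sin (j * θ)).comp θ ((hasDerivAt_id θ).const_mul j))
    simpa [mul_comm, mul_div_assoc] using this.div_const j |>.congr_deriv (by
      field_simp)
  rw [intervalIntegral.integral_eq_sub_of_hasDerivAt h
    (by apply Continuous.intervalIntegrable; continuity)]
  obtain ⟨m, rfl⟩ := hjint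
  simp [Real.sin_int_mul_pi]

lemma integral_cos_mul_cos (k n : ℕ) :
    ∫ θ in (0:ℝ)..Real.pi, Real.cos (k * θ) * Real.cos (n * θ)
      = if k = n then (if k = 0 then Real.pi else Real.pi / 2) else 0 := by
  have hid : ∀ θ : ℝ, Real.cos (k * θ) * Real.cos (n * θ)
      = (Real.cos (((k:ℝ) + n) * θ) + Real.cos (((k:ℝ) - n) * θ)) / 2 := by
    intro θ
    rw [show ((k:ℝ) + n) * θ = k*θ + n*θ by ring, show ((k:ℝ) - n) * θ = k*θ - n*θ by ring,
      Real.cos_add, Real.cos_sub]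
    ring
  simp only [hid]
  rw [intervalIntegral.integral_div]
  rw [intervalIntegral.integral_add (by apply Continuous.intervalIntegrable; continuity)
    (by apply Continuous.intervalIntegrable; continuity)]
  rcases eq_or_ne k n with rfl | hkn
  · have h2 : ∫ θ in (0:ℝ)..Real.pi, Real.cos (((k:ℝ) - k) * θ) = Real.pi := by
      norm_num
    rcases eq_or_ne k 0 with rfl | hk0
    · norm_num
    · have hkpos : (0:ℝ) < k := by exact_mod_cast Nat.pos_of_ne_zero hk0
      have h1 : ∫ θ in (0:ℝ)..Real.pi, Real.cos (((k:ℝ) + k) * θ) = 0 :=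
        integral_cos_int_mul (by positivity) ⟨2*k, by push_cast; ring⟩
      rw [h1, h2]; simp [hk0]
  · have hsum : (0:ℝ) < (k:ℝ) + n := by
      have : 0 < k + n := Nat.pos_of_ne_zero (by omega)
      exact_mod_cast this
    have h1 : ∫ θ in (0:ℝ)..Real.pi, Real.cos (((k:ℝ) + n) * θ) = 0 :=
      integral_cos_int_mul (ne_of_gt hsum) ⟨(k:ℤ) + n, by push_cast; ring⟩
    have h2 : ∫ θ in (0:ℝ)..Real.pi, Real.cos (((k:ℝ) - n) * θ) = 0 :=
      integral_cos_int_mul (sub_ne_zero.2 (by exact_mod_cast hkn)) ⟨(k:ℤ) - n, by push_cast; ring⟩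
    rw [h1, h2]; simp [hkn]



lemma hasSum_cos_log {c : ℝ} (hc0 : 0 < c) (hc1 : c < 1) (θ : ℝ) :
    HasSum (fun n : ℕ => 2 * (c ^ (n+1) / (n+1)) * Real.cos ((n+1 : ℕ) * θ))
      (-Real.log c - Real.log (c + 1/c - 2 * Real.cos θ)) := by
  set z : ℂ := (c : ℂ) * Complex.exp (θ * Complex.I) with hz
  have hznorm : ‖z‖ < 1 := by
    rw [hz]
    calc ‖(c:ℂ) * Complex.exp (θ * Complex.I)‖
        = ‖(c:ℂ)‖ * ‖Complex.exp (θ * Complex.I)‖ := norm_mul _ _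
      _ = c := by
          rw [Complex.norm_exp_ofReal_mul_I]
          simp [abs_of_pos hc0]
      _ < 1 := hc1
  -- real part of each term
  have hterm : ∀ n : ℕ, (z ^ n / n).re = c ^ n / n * Real.cos (n * θ) := by
    intro n
    have hzn : z ^ n = ((c ^ n : ℝ) : ℂ) * Complex.exp ((n * θ : ℝ) * Complex.I) := by
      rw [hz, mul_pow, ← Complex.exp_nat_mul]
      push_cast
      ring_nf
    rw [hzn, Complex.div_natCast_re, Complex.mul_re]
    simp only [← Complex.ofReal_pow, Complex.ofReal_re, Complex.ofReal_im,
      Complex.exp_ofReal_mul_I_re, Complex.exp_ofReal_mul_I_im]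
    push_cast
    ring
  -- real part of the sum
  have habs : ‖1 - z‖ ^ 2 = 1 - 2 * c * Real.cos θ + c ^ 2 := by
    rw [← Complex.normSq_eq_norm_sq, Complex.normSq_apply]
    have h1 : (1 - z).re = 1 - c * Real.cos θ := by
      simp [hz, Complex.mul_re, Complex.exp_ofReal_mul_I_re, Complex.exp_ofReal_mul_I_im]
    have h2 : (1 - z).im = -(c * Real.sin θ) := by
      simp [hz, Complex.mul_im, Complex.exp_ofReal_mul_I_re, Complex.exp_ofReal_mul_I_im]
    rw [h1, h2]
    nlinarith [Real.sin_sq_add_cos_sq θ]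
  have hQpos : (0:ℝ) < 1 - 2 * c * Real.cos θ + c ^ 2 := by
    nlinarith [Real.neg_one_le_cos θ, Real.cos_le_one θ]
  have hsumre : (-Complex.log (1 - z)).re
      = -(1/2) * Real.log (1 - 2 * c * Real.cos θ + c ^ 2) := by
    rw [Complex.neg_re, Complex.log_re]
    have : Real.log ‖1 - z‖ = Real.log ((1 - 2*c*Real.cos θ + c^2) ^ ((1:ℝ)/2)) := by
      rw [← habs]
      rw [← Real.rpow_natCast ‖1 - z‖ 2, ← Real.rpow_mul (norm_nonneg _)]
      norm_num
    rw [this, Real.log_rpow hQpos]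
    ring
  have h0 := Complex.hasSum_re (Complex.hasSum_taylorSeries_neg_log hznorm)
  simp only [hterm] at h0
  have h1 := (hasSum_nat_add_iff' 1).2 h0
  simp only [Finset.range_one, Finset.sum_singleton, Nat.cast_zero, pow_zero] at h1
  -- clean up the subtracted initial term (n = 0 gives 0 since division by 0)
  have h1' : HasSum (fun n : ℕ => c ^ (n+1) / (n+1) * Real.cos ((n+1:ℕ) * θ))
      ((-Complex.log (1 - z)).re) := by
    convert h1 using 2 with n
    · rfl
    · push_cast; ring_nf
    · norm_num
  have h2 := h1'.mul_left 2
  have hc' : c + 1/c - 2 * Real.cos θ = (1 - 2*c*Real.cos θ + c^2) / c := by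
    field_simp; ring
  have hval : 2 * ((-Complex.log (1 - z)).re)
      = -Real.log c - Real.log (c + 1/c - 2 * Real.cos θ) := by
    rw [hsumre, hc', Real.log_div (ne_of_gt hQpos) (ne_of_gt hc0)]
    ring
  rw [hval] at h2
  convert h2 using 2 with n
  · rfl
  push_cast
  ring


lemma pos_logarg {c : ℝ} (hc0 : 0 < c) (hc1 : c < 1) (θ : ℝ) :
    0 < c + 1/c - 2 * Real.cos θ := by
  have h1 : 0 < (1-c)^2/c := div_pos (pow_pos (by linarith) 2) hc0
  have h2 : c + 1/c - 2 = (1-c)^2/c := by field_simp; ring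
  nlinarith [Real.cos_le_one θ]

lemma continuous_logterm {c : ℝ} (hc0 : 0 < c) (hc1 : c < 1) :
    Continuous (fun θ : ℝ => Real.log (c + 1/c - 2 * Real.cos θ)) := by
  apply Continuous.log (by continuity)
  exact fun θ => ne_of_gt (pos_logarg hc0 hc1 θ)

lemma integral_cos_mul_log {c : ℝ} (hc0 : 0 < c) (hc1 : c < 1) (k : ℕ) :
    ∫ θ in (0:ℝ)..Real.pi, Real.cos (k * θ) * Real.log (c + 1/c - 2 * Real.cos θ)
      = if k = 0 then -(Real.pi * Real.log c) else -(Real.pi * c ^ k / k) := by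
  set L : ℝ → ℝ := fun θ => Real.log (c + 1/c - 2 * Real.cos θ) with hL
  set F : ℕ → ℝ → ℝ := fun n θ =>
    Real.cos (k * θ) * (2 * (c ^ (n+1) / (n+1)) * Real.cos ((n+1 : ℕ) * θ)) with hF
  have hsum : HasSum (fun n => ∫ θ in (0:ℝ)..Real.pi, F n θ)
      (∫ θ in (0:ℝ)..Real.pi, Real.cos (k * θ) * (-Real.log c - L θ)) := by
    apply intervalIntegral.hasSum_integral_of_dominated_convergence
      (μ := MeasureTheory.volume) (bound := fun n (_ : ℝ) => 2 * c ^ (n+1))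
    · intro n
      apply Continuous.aestronglyMeasurable
      fun_prop
    · intro n
      filter_upwards with θ _
      have h1 : |Real.cos (k * θ)| ≤ 1 := Real.abs_cos_le_one _
      have h2 : |Real.cos ((n+1:ℕ) * θ)| ≤ 1 := Real.abs_cos_le_one _
      have h3 : c ^ (n+1) / (n+1) ≤ c ^ (n+1) := by
        apply div_le_self (by positivity)
        exact le_add_of_nonneg_left (Nat.cast_nonneg n)
      have h4 : (0:ℝ) ≤ c ^ (n+1) / (n+1) := by positivity
      calc ‖F n θ‖
          = |Real.cos (k * θ)| * (|2 * (c ^ (n+1) / ((n:ℝ)+1))| * |Real.cos ((n+1:ℕ) * θ)|) := by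
            rw [hF, Real.norm_eq_abs, abs_mul, abs_mul]
        _ = |Real.cos (k * θ)| * (2 * (c ^ (n+1) / ((n:ℝ)+1)) * |Real.cos ((n+1:ℕ) * θ)|) := by
            rw [abs_of_nonneg (by positivity : (0:ℝ) ≤ 2 * (c ^ (n+1) / ((n:ℝ)+1)))]
        _ ≤ 1 * (2 * (c ^ (n+1) / ((n:ℝ)+1)) * 1) := by
            apply mul_le_mul h1 _ (by positivity) zero_le_one
            apply mul_le_mul_of_nonneg_left h2 (by positivity)
        _ ≤ 2 * c ^ (n+1) := by rw [one_mul, mul_one]; linarith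
    · filter_upwards with θ _
      apply Summable.mul_left
      exact (summable_geometric_of_lt_one hc0.le hc1).comp_injective (add_left_injective 1)
    · exact intervalIntegrable_const
    · filter_upwards with θ _
      exact (hasSum_cos_log hc0 hc1 θ).mul_left (Real.cos (k * θ))
  -- compute each inner integral
  have hint : ∀ n : ℕ, (∫ θ in (0:ℝ)..Real.pi, F n θ)
      = if k = n + 1 then Real.pi * c ^ k / k else 0 := by
    intro n
    have : ∀ θ : ℝ, F n θ = (2 * (c ^ (n+1) / (n+1))) * (Real.cos (k * θ) * Real.cos ((n+1:ℕ) * θ)) := by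
      intro θ; rw [hF]; ring
    simp only [this]
    rw [intervalIntegral.integral_const_mul, integral_cos_mul_cos k (n+1)]
    rcases eq_or_ne k (n+1) with rfl | hk
    · simp only [if_pos rfl, if_neg (Nat.succ_ne_zero n)]
      push_cast
      field_simp
    · simp [hk]
  simp only [hint] at hsum
  -- sum of the if-function
  have hsum2 : HasSum (fun n : ℕ => if k = n + 1 then Real.pi * c ^ k / k else 0)
      (if k = 0 then 0 else Real.pi * c ^ k / k) := by
    rcases eq_or_ne k 0 with rfl | hk
    · simp only [if_pos rfl]
      have hz : ∀ n : ℕ, (if (0:ℕ) = n + 1 then Real.pi * c ^ 0 / ((0:ℕ):ℝ) else 0) = 0 :=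
        fun n => if_neg (by omega)
      simpa [hz] using (hasSum_zero : HasSum (fun _ : ℕ => (0:ℝ)) 0)
    · obtain ⟨m, rfl⟩ := Nat.exists_eq_succ_of_ne_zero hk
      rw [if_neg hk]
      have heq : (fun n : ℕ => if m + 1 = n + 1 then Real.pi * c ^ (m+1) / ((m+1 : ℕ) : ℝ) else 0)
          = fun n : ℕ => if n = m then Real.pi * c ^ (m+1) / ((m+1 : ℕ) : ℝ) else 0 := by
        funext n
        rcases eq_or_ne n m with rfl | h'
        · simp
        · rw [if_neg (by omega), if_neg h']
      rw [heq]
      exact hasSum_ite_eq m _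
  have hkey := hsum.unique hsum2
  -- expand the integral of cos(kθ)(-log c - L θ)
  have hsplit : (∫ θ in (0:ℝ)..Real.pi, Real.cos (k * θ) * (-Real.log c - L θ))
      = (-Real.log c) * (∫ θ in (0:ℝ)..Real.pi, Real.cos (k * θ) * Real.cos ((0:ℕ) * θ))
        - ∫ θ in (0:ℝ)..Real.pi, Real.cos (k * θ) * L θ := by
    rw [← intervalIntegral.integral_const_mul, ← intervalIntegral.integral_sub]
    · apply intervalIntegral.integral_congr
      intro θ _
      simp only [hL, Nat.cast_zero, zero_mul, Real.cos_zero]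
      ring
    · apply Continuous.intervalIntegrable; fun_prop
    · apply Continuous.intervalIntegrable
      exact (Real.continuous_cos.comp (by fun_prop)).mul (continuous_logterm hc0 hc1)
  rw [hsplit, integral_cos_mul_cos k 0] at hkey
  rcases eq_or_ne k 0 with rfl | hk
  · simp only [hL] at hkey ⊢
    norm_num at hkey ⊢
    linarith
  · simp only [if_neg hk, hL] at hkey ⊢
    linarith

lemma phi_point (d w₄ ω : ℝ) (hd0 : 0 < d) (hω0 : 0 < ω) (hωd : ω < Real.sqrt d) (θ : ℝ) :
    phiTestTilde d w₄ ω (2 * Real.cos θ)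
      = 2 * ((ω / d) * (2 / (w₄ - 1) - 1)) * Real.sqrt d * Real.cos θ
        + ((ω / d) * (2 / (w₄ - 1) - 1) * (1 + d) - Real.log d / 2)
        - Real.log ((ω / Real.sqrt d) + 1/(ω / Real.sqrt d) - 2 * Real.cos θ) := by
  have hsd : 0 < Real.sqrt d := Real.sqrt_pos.2 hd0
  set s := Real.sqrt d with hs
  have hss : s * s = d := Real.mul_self_sqrt hd0.le
  set c : ℝ := ω / s with hc
  set a : ℝ := (ω / d) * (2 / (w₄ - 1) - 1) with ha
  have hc0 : 0 < c := div_pos hω0 hsd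
  have hc1 : c < 1 := (div_lt_one hsd).2 hωd
  unfold phiTestTilde phiTest
  have harg : (1 + d / ω) * (1 + ω) - (s * (2 * Real.cos θ) + 1 + d)
      = s * (c + 1/c - 2 * Real.cos θ) := by
    rw [hc]
    field_simp
    ring_nf
    linear_combination (-1) * hss
  rw [harg, Real.log_mul hsd.ne' (ne_of_gt (pos_logarg hc0 hc1 θ)), ← hs,
    Real.log_sqrt hd0.le]
  rw [ha]
  ring


lemma tau_phi (d w₄ ω : ℝ) (hd0 : 0 < d) (hω0 : 0 < ω) (hωd : ω < Real.sqrt d) (ℓ : ℕ) :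
    tau ℓ (phiTestTilde d w₄ ω)
      = (if ℓ = 1 then (ω / d) * (2 / (w₄ - 1) - 1) * Real.sqrt d else 0)
        + (if ℓ = 0
            then (ω / d) * (2 / (w₄ - 1) - 1) * (1 + d) - Real.log d / 2
                  + Real.log (ω / Real.sqrt d)
            else (ω / Real.sqrt d) ^ ℓ / ℓ) := by
  have hsd : 0 < Real.sqrt d := Real.sqrt_pos.2 hd0
  set s := Real.sqrt d with hs
  have hss : s * s = d := Real.mul_self_sqrt hd0.le
  set c : ℝ := ω / s with hc
  set a : ℝ := (ω / d) * (2 / (w₄ - 1) - 1) with ha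
  have hc0 : 0 < c := div_pos hω0 hsd
  have hc1 : c < 1 := (div_lt_one hsd).2 hωd
  have hpoint : ∀ θ : ℝ, phiTestTilde d w₄ ω (2 * Real.cos θ)
      = 2 * a * s * Real.cos θ + (a * (1 + d) - Real.log d / 2)
        - Real.log (c + 1/c - 2 * Real.cos θ) := fun θ => phi_point d w₄ ω hd0 hω0 hωd θ
  unfold tau
  have hsubst := integral_subst_cos
    (fun x => (Polynomial.Chebyshev.T ℝ (ℓ : ℤ)).eval (x / 2) * phiTestTilde d w₄ ω x)
  rw [hsubst]
  have hg : ∀ θ : ℝ,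
      (Polynomial.Chebyshev.T ℝ (ℓ : ℤ)).eval ((2 * Real.cos θ) / 2)
          * phiTestTilde d w₄ ω (2 * Real.cos θ)
      = (2 * a * s) * (Real.cos ((ℓ:ℕ) * θ) * Real.cos ((1:ℕ) * θ))
        + (a * (1 + d) - Real.log d / 2) * (Real.cos ((ℓ:ℕ) * θ) * Real.cos ((0:ℕ) * θ))
        - Real.cos ((ℓ:ℕ) * θ) * Real.log (c + 1/c - 2 * Real.cos θ) := by
    intro θ
    have h2 : (2 * Real.cos θ) / 2 = Real.cos θ := by ring
    rw [h2, Polynomial.Chebyshev.T_real_cos, hpoint θ]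
    push_cast
    simp only [Real.cos_zero, zero_mul, one_mul]
    ring
  simp only [hg]
  rw [intervalIntegral.integral_sub (by
      apply IntervalIntegrable.add <;>
        (apply Continuous.intervalIntegrable; fun_prop))
    (by
      apply Continuous.intervalIntegrable
      exact (Real.continuous_cos.comp (by fun_prop)).mul (continuous_logterm hc0 hc1)),
    intervalIntegral.integral_add (by apply Continuous.intervalIntegrable; fun_prop)
      (by apply Continuous.intervalIntegrable; fun_prop),
    intervalIntegral.integral_const_mul, intervalIntegral.integral_const_mul,
    integral_cos_mul_cos ℓ 1, integral_cos_mul_cos ℓ 0, integral_cos_mul_log hc0 hc1 ℓ]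
  have hπ : Real.pi ≠ 0 := Real.pi_ne_zero
  rcases eq_or_ne ℓ 0 with rfl | h0
  · norm_num
    field_simp
  · rcases eq_or_ne ℓ 1 with rfl | h1
    · norm_num
      field_simp
      try ring
    · have hl0 : (ℓ:ℝ) ≠ 0 := by exact_mod_cast h0
      simp only [if_neg h0, if_neg h1, if_neg (fun h : ℓ = 0 => h0 h)]
      field_simp
      try ring

/-- The limiting means of the test statistic under `H₀` and `H₁`:
`m|H₀ = (φ̃(2) + φ̃(-2))/4 - τ₀(φ̃)/2 - (w₄-3)τ₂(φ̃) = -(1/2)log(1-ω²/d) - (ω²/(2d))(w₄-3)` and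
`m|H₁ = m|H₀ + Σ_{ℓ≥1} (ω/√d)^ℓ τ_ℓ(φ̃) = m|H₀ - log(1-ω²/d) + (ω²/d)(2/(w₄-1)-1)`;
in particular `m|H₀ < m|H₁`. -/
theorem limiting_means_of_test_statistic (d w₄ ω : ℝ) (hd : d ∈ Set.Ioc (0 : ℝ) 1)
    (hw : 1 < w₄) (hω : ω ∈ Set.Ioo (0 : ℝ) (Real.sqrt d)) :
    ((phiTestTilde d w₄ ω 2 + phiTestTilde d w₄ ω (-2)) / 4
        - tau 0 (phiTestTilde d w₄ ω) / 2 - (w₄ - 3) * tau 2 (phiTestTilde d w₄ ω)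
      = -(1 / 2) * Real.log (1 - ω ^ 2 / d) - (ω ^ 2 / (2 * d)) * (w₄ - 3)) ∧
    ((∑' ℓ : ℕ, (ω / Real.sqrt d) ^ (ℓ + 1) * tau (ℓ + 1) (phiTestTilde d w₄ ω))
      = -Real.log (1 - ω ^ 2 / d) + (ω ^ 2 / d) * (2 / (w₄ - 1) - 1)) ∧
    ((phiTestTilde d w₄ ω 2 + phiTestTilde d w₄ ω (-2)) / 4
        - tau 0 (phiTestTilde d w₄ ω) / 2 - (w₄ - 3) * tau 2 (phiTestTilde d w₄ ω)
      < (phiTestTilde d w₄ ω 2 + phiTestTilde d w₄ ω (-2)) / 4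
        - tau 0 (phiTestTilde d w₄ ω) / 2 - (w₄ - 3) * tau 2 (phiTestTilde d w₄ ω)
        + ∑' ℓ : ℕ, (ω / Real.sqrt d) ^ (ℓ + 1) * tau (ℓ + 1) (phiTestTilde d w₄ ω)) := by
  obtain ⟨hd0, hd1⟩ := hd
  obtain ⟨hω0, hωd⟩ := hω
  have hsd : 0 < Real.sqrt d := Real.sqrt_pos.2 hd0
  set s := Real.sqrt d with hs
  have hss : s * s = d := Real.mul_self_sqrt hd0.le
  set c : ℝ := ω / s with hc
  set a : ℝ := (ω / d) * (2 / (w₄ - 1) - 1) with ha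
  have hc0 : 0 < c := div_pos hω0 hsd
  have hc1 : c < 1 := (div_lt_one hsd).2 hωd
  have hsc : s * c = ω := by rw [hc]; field_simp
  have hc2 : c ^ 2 = ω ^ 2 / d := by
    rw [hc, div_pow, hs, Real.sq_sqrt hd0.le]
  have h1mc : (0:ℝ) < 1 - c := by linarith
  have h1pc : (0:ℝ) < 1 + c := by linarith
  -- log identities
  have hlog1 : Real.log (c + 1/c - 2) = 2 * Real.log (1 - c) - Real.log c := by
    have he : c + 1/c - 2 = (1-c)^2 / c := by field_simp; ring
    rw [he, Real.log_div (pow_ne_zero 2 h1mc.ne') hc0.ne', Real.log_pow]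
    push_cast; ring
  have hlog2 : Real.log (c + 1/c + 2) = 2 * Real.log (1 + c) - Real.log c := by
    have he : c + 1/c + 2 = (1+c)^2 / c := by field_simp; ring
    rw [he, Real.log_div (pow_ne_zero 2 h1pc.ne') hc0.ne', Real.log_pow]
    push_cast; ring
  have hlogm : Real.log (1 - ω^2/d) = Real.log (1 - c) + Real.log (1 + c) := by
    rw [← hc2, show 1 - c^2 = (1-c)*(1+c) by ring, Real.log_mul h1mc.ne' h1pc.ne']
  -- φ̃ values
  have hphi2 : phiTestTilde d w₄ ω 2
      = 2 * a * s + (a * (1 + d) - Real.log d / 2) - (2 * Real.log (1 - c) - Real.log c) := by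
    have h := phi_point d w₄ ω hd0 hω0 hωd 0
    simp only [Real.cos_zero, mul_one] at h
    rw [← hs, ← hc, ← ha] at h
    rw [h, hlog1]
  have hphim2 : phiTestTilde d w₄ ω (-2)
      = -(2 * a * s) + (a * (1 + d) - Real.log d / 2) - (2 * Real.log (1 + c) - Real.log c) := by
    have h := phi_point d w₄ ω hd0 hω0 hωd Real.pi
    simp only [Real.cos_pi, mul_neg_one] at h
    rw [← hs, ← hc, ← ha] at h
    rw [h, show c + 1/c - -2 = c + 1/c + 2 by ring, hlog2]
  -- τ values
  have htau0 : tau 0 (phiTestTilde d w₄ ω)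
      = a * (1 + d) - Real.log d / 2 + Real.log c := by
    rw [tau_phi d w₄ ω hd0 hω0 hωd 0]
    norm_num
    rfl
  have htau2 : tau 2 (phiTestTilde d w₄ ω) = c ^ 2 / 2 := by
    rw [tau_phi d w₄ ω hd0 hω0 hωd 2]
    norm_num
    rfl
  -- Part 1
  have hpart1 : (phiTestTilde d w₄ ω 2 + phiTestTilde d w₄ ω (-2)) / 4
      - tau 0 (phiTestTilde d w₄ ω) / 2 - (w₄ - 3) * tau 2 (phiTestTilde d w₄ ω)
      = -(1 / 2) * Real.log (1 - ω ^ 2 / d) - (ω ^ 2 / (2 * d)) * (w₄ - 3) := by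
    rw [hphi2, hphim2, htau0, htau2, hlogm,
      show ω^2/(2*d) = c^2/2 by rw [hc2]; ring]
    ring
  -- Part 2 : the tsum
  have hterm : ∀ ℓ : ℕ, c ^ (ℓ + 1) * tau (ℓ + 1) (phiTestTilde d w₄ ω)
      = (if ℓ = 0 then a * s * c else 0) + (c^2) ^ (ℓ + 1) / ((ℓ:ℝ) + 1) := by
    intro ℓ
    rw [tau_phi d w₄ ω hd0 hω0 hωd (ℓ + 1), ← hs, ← hc, ← ha]
    have hpow : c ^ (ℓ+1) * (c ^ (ℓ+1) / ((ℓ+1 : ℕ):ℝ)) = (c^2)^(ℓ+1) / ((ℓ:ℝ)+1) := by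
      rw [← pow_mul, two_mul, pow_add]
      push_cast
      ring
    rcases eq_or_ne ℓ 0 with rfl | h0
    · norm_num
      ring
    · rw [if_neg (by omega : ¬ ℓ + 1 = 1), if_neg (by omega : ¬ ℓ + 1 = 0), if_neg h0]
      rw [mul_add, mul_zero, zero_add, zero_add, hpow]
  have hg2 : HasSum (fun ℓ : ℕ => (c^2) ^ (ℓ + 1) / ((ℓ:ℝ) + 1))
      (-(Real.log (1 - c) + Real.log (1 + c))) := by
    have hcc0 : (0:ℝ) < c^2 := by positivity
    have hcc1 : c^2 < 1 := by nlinarith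
    have h := hasSum_cos_log hcc0 hcc1 0
    simp only [mul_zero, Real.cos_zero, mul_one] at h
    have h' := h.div_const 2
    have hval : (-Real.log (c^2) - Real.log (c^2 + 1/c^2 - 2)) / 2
        = -(Real.log (1 - c) + Real.log (1 + c)) := by
      have he : c^2 + 1/c^2 - 2 = ((1-c)*(1+c))^2 / (c^2) := by field_simp; ring
      have hmne : (1-c)*(1+c) ≠ 0 := ne_of_gt (mul_pos h1mc h1pc)
      rw [he, Real.log_div (pow_ne_zero 2 hmne) (by positivity),
        show ((1-c)*(1+c))^2 = ((1-c)*(1+c))*((1-c)*(1+c)) by ring,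
        Real.log_mul hmne hmne, Real.log_mul h1mc.ne' h1pc.ne']
      ring
    rw [hval] at h'
    convert h' using 2 with n
    · rfl
    push_cast; ring
  have hg1 : HasSum (fun ℓ : ℕ => if ℓ = 0 then a * s * c else 0) (a * s * c) :=
    hasSum_ite_eq 0 (a * s * c)
  have hsumtotal : HasSum (fun ℓ : ℕ => c ^ (ℓ + 1) * tau (ℓ + 1) (phiTestTilde d w₄ ω))
      (a * s * c + -(Real.log (1 - c) + Real.log (1 + c))) := by
    have heq : (fun ℓ : ℕ => c ^ (ℓ + 1) * tau (ℓ + 1) (phiTestTilde d w₄ ω))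
        = fun ℓ : ℕ => (if ℓ = 0 then a * s * c else 0) + (c^2) ^ (ℓ + 1) / ((ℓ:ℝ) + 1) :=
      funext hterm
    rw [heq]
    exact hg1.add hg2
  have h3 : a * s * c = ω^2/d * (2/(w₄-1)-1) := by
    rw [ha, show (ω/d) * (2/(w₄-1)-1) * s * c = (s*c) * (ω/d) * (2/(w₄-1)-1) by ring, hsc]
    ring
  have hpart2 : (∑' ℓ : ℕ, c ^ (ℓ + 1) * tau (ℓ + 1) (phiTestTilde d w₄ ω))
      = -Real.log (1 - ω ^ 2 / d) + (ω ^ 2 / d) * (2 / (w₄ - 1) - 1) := by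
    rw [hsumtotal.tsum_eq, hlogm, h3]
    ring
  refine ⟨hpart1, hpart2, ?_⟩
  rw [hpart2]
  have ht0 : 0 < ω^2/d := by positivity
  have ht1 : ω^2/d < 1 := by
    rw [← hc2]; exact pow_lt_one₀ hc0.le hc1 two_ne_zero
  have hlog : Real.log (1 - ω^2/d) < -(ω^2/d) := by
    have := Real.log_lt_sub_one_of_pos (by linarith : (0:ℝ) < 1 - ω^2/d)
      (ne_of_lt (by linarith : 1 - ω^2/d < 1))
    linarith
  have hpos2 : 0 < (ω^2/d) * (2/(w₄-1)) := mul_pos ht0 (div_pos two_pos (by linarith))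
  have hx : (ω^2/d) * (2/(w₄-1) - 1) = (ω^2/d)*(2/(w₄-1)) - ω^2/d := by ring
  linarith


end
end

section
/- Fix d ∈ (0,1], w₄ > 1 and ω ∈ (0,√d), and let φ̃_ω(x) := φ_ω(√d·x + 1 + d). Then the Chebyshev coefficients of φ̃_ω satisfy τ₁(φ̃_ω) = 2ω/(√d·(w₄-1)) and τ_ℓ(φ̃_ω) = (1/ℓ)·(ω/√d)^ℓ for every ℓ ≥ 2. Consequently, the limiting variance of the test statistic equals V₀ := 2·Σ_{ℓ=1}^∞ ℓ·τ_ℓ(φ̃_ω)² + (w₄-3)·τ₁(φ̃_ω)² = -2·log(1 - ω²/d) + (2ω²/d)(2/(w₄-1) - 1). -/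
open MeasureTheory

noncomputable section

set_option maxHeartbeats 1000000

open Real

lemma intCosFreq (c : ℝ) (hc : c ≠ 0) :
    ∫ θ in (0:ℝ)..π, Real.cos (c * θ) = Real.sin (c * π) / c := by
  rw [intervalIntegral.integral_comp_mul_left (fun x => Real.cos x) hc]
  simp [integral_cos, div_eq_inv_mul]

lemma intCosInt (n : ℤ) (hn : n ≠ 0) :
    ∫ θ in (0:ℝ)..π, Real.cos ((n : ℝ) * θ) = 0 := by
  rw [intCosFreq _ (by exact_mod_cast hn)]
  simp [Real.sin_int_mul_pi]

lemma orth (n m : ℕ) (hn : 1 ≤ n) (hm : 1 ≤ m) :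
    ∫ θ in (0:ℝ)..π, Real.cos ((n : ℝ) * θ) * Real.cos ((m : ℝ) * θ)
      = if n = m then π / 2 else 0 := by
  have key : ∀ θ : ℝ, Real.cos ((n : ℝ) * θ) * Real.cos ((m : ℝ) * θ)
      = (Real.cos (((n : ℝ) + m) * θ) + Real.cos (((n : ℝ) - m) * θ)) / 2 := by
    intro θ
    rw [show ((n : ℝ) + m) * θ = (n : ℝ) * θ + (m : ℝ) * θ by ring,
      show ((n : ℝ) - m) * θ = (n : ℝ) * θ - (m : ℝ) * θ by ring, Real.cos_add, Real.cos_sub]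
    ring
  simp_rw [key]
  rw [intervalIntegral.integral_div, intervalIntegral.integral_add
    ((by fun_prop : Continuous fun θ : ℝ => Real.cos (((n:ℝ)+m)*θ)).intervalIntegrable 0 π)
    ((by fun_prop : Continuous fun θ : ℝ => Real.cos (((n:ℝ)-m)*θ)).intervalIntegrable 0 π)]
  have h1 : ∫ θ in (0:ℝ)..π, Real.cos (((n : ℝ) + m) * θ) = 0 := by
    have := intCosInt ((n : ℤ) + m) (by positivity)
    push_cast at this ⊢; exact this
  rw [h1]
  by_cases h : n = m
  · subst h
    simp only [sub_self, zero_mul, Real.cos_zero, if_pos rfl]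
    rw [intervalIntegral.integral_const]
    simp
  · have h2 : ∫ θ in (0:ℝ)..π, Real.cos (((n : ℝ) - m) * θ) = 0 := by
      have := intCosInt ((n : ℤ) - m) (by
        intro hc; apply h; omega)
      push_cast at this ⊢; exact this
    rw [h2, if_neg h]; ring

lemma hasSum_log_cos (t θ : ℝ) (ht0 : 0 ≤ t) (ht : t < 1) :
    HasSum (fun k : ℕ => 2 * t ^ (k + 1) * Real.cos (((k + 1 : ℕ) : ℝ) * θ) / (k + 1))
      (-Real.log (1 - 2 * t * Real.cos θ + t ^ 2)) := by
  set z : ℂ := (t : ℂ) * Complex.exp (θ * Complex.I) with hzdef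
  have hznorm : ‖z‖ < 1 := by
    rw [hzdef, norm_mul, Complex.norm_exp_ofReal_mul_I]
    simpa [abs_of_nonneg ht0] using ht
  have H := Complex.hasSum_taylorSeries_neg_log hznorm
  have Hre := Complex.hasSum_re H
  have H1 := (hasSum_nat_add_iff' (f := fun n : ℕ => ((z ^ n / n : ℂ)).re) 1).mpr Hre
  have h0 : ∑ i ∈ Finset.range 1, ((z ^ i / i : ℂ)).re = 0 := by simp
  rw [h0, sub_zero] at H1
  have hterm : ∀ n : ℕ, ((z ^ (n + 1) / ((n : ℂ) + 1) : ℂ)).re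
      = t ^ (n + 1) * Real.cos (((n + 1 : ℕ) : ℝ) * θ) / (n + 1) := by
    intro n
    have e1 : z ^ (n + 1)
        = ((t ^ (n + 1) : ℝ) : ℂ) * Complex.exp ((((n + 1 : ℕ) : ℝ) * θ : ℝ) * Complex.I) := by
      rw [hzdef, mul_pow, ← Complex.exp_nat_mul]
      push_cast
      ring_nf
    have e2 : ((n : ℂ) + 1) = (((n : ℝ) + 1 : ℝ) : ℂ) := by push_cast; ring
    rw [e1, e2, Complex.div_ofReal_re, Complex.re_ofReal_mul, Complex.exp_ofReal_mul_I_re]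
  have habs : ‖1 - z‖ ^ 2 = 1 - 2 * t * Real.cos θ + t ^ 2 := by
    rw [Complex.sq_norm, Complex.normSq_apply]
    simp [hzdef, Complex.sub_re, Complex.sub_im, Complex.mul_re, Complex.mul_im]
    nlinarith [Real.sin_sq_add_cos_sq θ]
  have hlogre : (-Complex.log (1 - z)).re
      = -(1/2) * Real.log (1 - 2 * t * Real.cos θ + t ^ 2) := by
    rw [Complex.neg_re, Complex.log_re, ← habs, Real.log_pow]
    push_cast; ring
  rw [hlogre] at H1
  have H2 := H1.mul_left 2
  have e3 : (fun k : ℕ => 2 * t ^ (k + 1) * Real.cos (((k + 1 : ℕ) : ℝ) * θ) / (k + 1))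
      = fun n : ℕ => 2 * ((z ^ (n + 1) / ((n : ℂ) + 1) : ℂ)).re := by
    funext n; rw [hterm]; ring
  rw [e3, show -Real.log (1 - 2 * t * Real.cos θ + t ^ 2)
      = 2 * (-(1/2) * Real.log (1 - 2 * t * Real.cos θ + t ^ 2)) by ring]
  convert H2 using 3 with n
  · rfl
  · push_cast; ring

lemma logInt (t : ℝ) (ht0 : 0 ≤ t) (ht : t < 1) (ℓ : ℕ) (hℓ : 1 ≤ ℓ) :
    ∫ θ in (0:ℝ)..π, Real.cos ((ℓ : ℝ) * θ) * Real.log (1 - 2 * t * Real.cos θ + t ^ 2)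
      = -(π * t ^ ℓ / ℓ) := by
  set μ := volume.restrict (Set.Ioc (0:ℝ) π) with hμ
  set F : ℕ → ℝ → ℝ := fun k θ =>
    (-(2 * t ^ (k + 1) / (k + 1))) * (Real.cos (((k + 1 : ℕ) : ℝ) * θ) * Real.cos ((ℓ : ℝ) * θ))
    with hF
  have hFcont : ∀ k, Continuous (F k) := by intro k; fun_prop
  have hsum : ∀ θ : ℝ, HasSum (fun k => F k θ)
      (Real.log (1 - 2 * t * Real.cos θ + t ^ 2) * Real.cos ((ℓ : ℝ) * θ)) := by
    intro θ
    have h := ((hasSum_log_cos t θ ht0 ht).mul_right (Real.cos ((ℓ : ℝ) * θ))).neg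
    rw [neg_mul, neg_neg] at h
    exact h.congr_fun (fun k => by simp only [hF]; push_cast; ring)
  have hInt : ∀ k, Integrable (F k) μ := fun k => (hFcont k).integrableOn_Ioc
  have hnorm : ∀ k, ∀ θ : ℝ, ‖F k θ‖ ≤ 2 * t ^ (k + 1) := by
    intro k θ
    have h1 : |Real.cos (((k + 1 : ℕ) : ℝ) * θ) * Real.cos ((ℓ : ℝ) * θ)| ≤ 1 := by
      rw [abs_mul]
      exact mul_le_one₀ (Real.abs_cos_le_one _) (abs_nonneg _) (Real.abs_cos_le_one _)
    have h2 : |(-(2 * t ^ (k + 1) / ((k : ℝ) + 1)))| ≤ 2 * t ^ (k + 1) := by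
      rw [abs_neg, abs_div, abs_of_nonneg (by positivity : (0:ℝ) ≤ 2 * t ^ (k+1)),
        abs_of_nonneg (by positivity : (0:ℝ) ≤ (k : ℝ) + 1)]
      exact div_le_self (by positivity) (by simp [le_add_iff_nonneg_left])
    calc ‖F k θ‖ = |(-(2 * t ^ (k + 1) / ((k : ℝ) + 1)))|
          * |Real.cos (((k + 1 : ℕ) : ℝ) * θ) * Real.cos ((ℓ : ℝ) * θ)| := by
          simp only [hF, Real.norm_eq_abs, abs_mul]
      _ ≤ 2 * t ^ (k + 1) * 1 := mul_le_mul h2 h1 (abs_nonneg _) (by positivity)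
      _ = 2 * t ^ (k + 1) := by ring
  have hg : Summable (fun k : ℕ => 2 * t ^ (k + 1) * π) := by
    have := (summable_geometric_of_lt_one ht0 ht).mul_left (2 * t * π)
    exact this.congr (fun k => by ring)
  have hSummable : Summable fun k => ∫ θ, ‖F k θ‖ ∂μ := by
    refine Summable.of_nonneg_of_le
      (fun k => integral_nonneg fun θ => norm_nonneg _) (fun k => ?_) hg
    calc ∫ θ, ‖F k θ‖ ∂μ ≤ ∫ _θ, 2 * t ^ (k + 1) ∂μ :=
            integral_mono_of_nonneg (Filter.Eventually.of_forall fun θ => norm_nonneg _)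
              (integrable_const _) (Filter.Eventually.of_forall fun θ => hnorm k θ)
        _ = 2 * t ^ (k + 1) * π := by
            simp [hμ, Real.volume_Ioc, ENNReal.toReal_ofReal Real.pi_pos.le]
            rw [max_eq_left Real.pi_pos.le]
            ring
  have hswap := MeasureTheory.integral_tsum_of_summable_integral_norm hInt hSummable
  have hIoc : ∀ g : ℝ → ℝ, (∫ θ, g θ ∂μ) = ∫ θ in (0:ℝ)..π, g θ := fun g =>
    (intervalIntegral.integral_of_le Real.pi_pos.le).symm
  have hFk : ∀ k, (∫ θ, F k θ ∂μ)
      = (-(2 * t ^ (k + 1) / (k + 1))) * (if k + 1 = ℓ then π / 2 else 0) := by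
    intro k
    rw [hIoc]
    simp only [hF]
    rw [intervalIntegral.integral_const_mul, orth (k + 1) ℓ (by omega) hℓ]
  have e : (fun θ => Real.cos ((ℓ : ℝ) * θ) * Real.log (1 - 2 * t * Real.cos θ + t ^ 2))
      = fun θ => ∑' k, F k θ := by
    funext θ; rw [(hsum θ).tsum_eq]; ring
  rw [e, ← hIoc, ← hswap]
  rw [tsum_eq_single (ℓ - 1) (fun k hk => by
    rw [hFk k, if_neg (by omega), mul_zero])]
  rw [hFk, if_pos (by omega)]
  have h3 : ℓ - 1 + 1 = ℓ := by omega
  rw [h3]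
  push_cast [h3]
  field_simp
  rw [Nat.cast_sub hℓ]; push_cast; ring

lemma tau_eq_integral (f : ℝ → ℝ) (ℓ : ℕ) :
    tau ℓ f = (1 / π) * ∫ θ in (0:ℝ)..π, Real.cos ((ℓ : ℝ) * θ) * f (2 * Real.cos θ) := by
  have himg : (fun θ : ℝ => 2 * Real.cos θ) '' Set.Ioo 0 π = Set.Ioo (-2 : ℝ) 2 := by
    ext y
    constructor
    · rintro ⟨θ, ⟨h1, h2⟩, rfl⟩
      have hmem : θ ∈ Set.Icc (0:ℝ) π := ⟨h1.le, h2.le⟩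
      have hc1 : Real.cos θ < Real.cos 0 :=
        Real.strictAntiOn_cos (Set.left_mem_Icc.2 Real.pi_pos.le) hmem h1
      have hc2 : Real.cos π < Real.cos θ :=
        Real.strictAntiOn_cos hmem (Set.right_mem_Icc.2 Real.pi_pos.le) h2
      rw [Real.cos_zero] at hc1; rw [Real.cos_pi] at hc2
      constructor <;> simp only [] <;> nlinarith
    · rintro ⟨hy1, hy2⟩
      refine ⟨Real.arccos (y / 2), ⟨?_, ?_⟩, ?_⟩
      · exact Real.arccos_pos.2 (by linarith)
      · have h := Real.neg_pi_div_two_lt_arcsin (x := y / 2) |>.2 (by linarith)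
        rw [Real.arccos]
        linarith
      · show 2 * Real.cos (Real.arccos (y / 2)) = y
        rw [Real.cos_arccos (by linarith) (by linarith)]; ring
  have hinj : Set.InjOn (fun θ : ℝ => 2 * Real.cos θ) (Set.Ioo 0 π) := by
    intro a ha b hb h
    exact Real.injOn_cos ⟨ha.1.le, ha.2.le⟩ ⟨hb.1.le, hb.2.le⟩
      (mul_left_cancel₀ two_ne_zero h)
  have hderiv : ∀ θ ∈ Set.Ioo (0:ℝ) π,
      HasDerivWithinAt (fun θ : ℝ => 2 * Real.cos θ) (-(2 * Real.sin θ)) (Set.Ioo 0 π) θ := by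
    intro θ _
    have := (Real.hasDerivAt_cos θ).const_mul 2
    simpa [mul_comm] using this.hasDerivWithinAt
  have hchg := integral_image_eq_integral_abs_deriv_smul measurableSet_Ioo hderiv hinj
    (fun x => (Polynomial.Chebyshev.T ℝ (ℓ : ℤ)).eval (x / 2) * f x / Real.sqrt (4 - x ^ 2))
  rw [himg] at hchg
  unfold tau
  congr 1
  rw [intervalIntegral.integral_of_le (by norm_num : (-2:ℝ) ≤ 2),
    integral_Ioc_eq_integral_Ioo, hchg,
    intervalIntegral.integral_of_le Real.pi_pos.le, integral_Ioc_eq_integral_Ioo]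
  apply setIntegral_congr_fun measurableSet_Ioo
  intro θ hθ
  have hs : 0 < Real.sin θ := Real.sin_pos_of_pos_of_lt_pi hθ.1 hθ.2
  have hsqrt : Real.sqrt (4 - (2 * Real.cos θ) ^ 2) = 2 * Real.sin θ := by
    rw [show 4 - (2 * Real.cos θ) ^ 2 = (2 * Real.sin θ) ^ 2 by
      nlinarith [Real.sin_sq_add_cos_sq θ]]
    exact Real.sqrt_sq (by positivity)
  have hT : (Polynomial.Chebyshev.T ℝ (ℓ : ℤ)).eval (2 * Real.cos θ / 2)
      = Real.cos ((ℓ : ℝ) * θ) := by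
    rw [show 2 * Real.cos θ / 2 = Real.cos θ by ring, Polynomial.Chebyshev.T_real_cos]
    norm_num
  simp only [smul_eq_mul, hsqrt, hT, abs_neg, abs_of_pos (by positivity : (0:ℝ) < 2 * Real.sin θ)]
  field_simp

/-- The Chebyshev coefficients of `φ̃_ω` are
`τ₁(φ̃_ω) = 2ω/(√d(w₄-1))`, `τ_ℓ(φ̃_ω) = (1/ℓ)(ω/√d)^ℓ` for `ℓ ≥ 2`, and consequently
`V₀ = 2Σ_{ℓ≥1} ℓ·τ_ℓ(φ̃_ω)² + (w₄-3)τ₁(φ̃_ω)² = -2log(1-ω²/d) + (2ω²/d)(2/(w₄-1)-1)`. -/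
theorem chebyshev_coefficients_of_phi (d w₄ ω : ℝ) (hd : d ∈ Set.Ioc (0 : ℝ) 1)
    (hw : 1 < w₄) (hω : ω ∈ Set.Ioo (0 : ℝ) (Real.sqrt d)) :
    (tau 1 (phiTestTilde d w₄ ω) = 2 * ω / (Real.sqrt d * (w₄ - 1))) ∧
    (∀ ℓ : ℕ, 2 ≤ ℓ →
      tau ℓ (phiTestTilde d w₄ ω) = (1 / (ℓ : ℝ)) * (ω / Real.sqrt d) ^ ℓ) ∧
    (2 * (∑' ℓ : ℕ, ((ℓ : ℝ) + 1) * tau (ℓ + 1) (phiTestTilde d w₄ ω) ^ 2)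
        + (w₄ - 3) * tau 1 (phiTestTilde d w₄ ω) ^ 2
      = -2 * Real.log (1 - ω ^ 2 / d) + (2 * ω ^ 2 / d) * (2 / (w₄ - 1) - 1)) := by
  obtain ⟨hd0, hd1⟩ := hd
  obtain ⟨hω0, hωd⟩ := hω
  have hsd : 0 < Real.sqrt d := Real.sqrt_pos.2 hd0
  have hdd : Real.sqrt d * Real.sqrt d = d := Real.mul_self_sqrt hd0.le
  set t : ℝ := ω / Real.sqrt d with htdef
  have ht0 : 0 < t := div_pos hω0 hsd
  have ht1 : t < 1 := (div_lt_one hsd).2 hωd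
  have hw1 : w₄ - 1 ≠ 0 := by linarith
  set c : ℝ := 2 / (w₄ - 1) - 1 with hcdef
  set B : ℝ := (ω / d) * c * (1 + d) - Real.log (d / ω) with hBdef
  have hE : ∀ x : ℝ, 0 < 1 - 2 * t * Real.cos x + t ^ 2 := by
    intro x
    nlinarith [Real.neg_one_le_cos x, Real.cos_le_one x, sq_nonneg (1 - t), sq_nonneg (1 + t),
      mul_nonneg ht0.le (sub_nonneg.2 (Real.cos_le_one x))]
  obtain ⟨s, hs0, hsd2, hsq⟩ : ∃ s, 0 < s ∧ Real.sqrt d = s ∧ s * s = d :=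
    ⟨_, hsd, rfl, hdd⟩
  have key : ∀ x : ℝ, phiTestTilde d w₄ ω (2 * Real.cos x)
      = 2 * t * c * Real.cos x + B - Real.log (1 - 2 * t * Real.cos x + t ^ 2) := by
    intro x
    unfold phiTestTilde phiTest
    have harg : (1 + d / ω) * (1 + ω) - (Real.sqrt d * (2 * Real.cos x) + 1 + d)
        = (d / ω) * (1 - 2 * t * Real.cos x + t ^ 2) := by
      rw [htdef, hsd2, ← hsq]
      field_simp
      ring
    rw [harg, Real.log_mul (by positivity) (hE x).ne']
    rw [htdef, hBdef, hcdef, hsd2, ← hsq]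
    field_simp [hw1]
    ring
  have hlogcont : Continuous fun θ : ℝ => Real.log (1 - 2 * t * Real.cos θ + t ^ 2) :=
    Continuous.log (by fun_prop) (fun θ => (hE θ).ne')
  have coef : ∀ ℓ : ℕ, 1 ≤ ℓ → tau ℓ (phiTestTilde d w₄ ω)
      = (if ℓ = 1 then t * c else 0) + t ^ ℓ / ℓ := by
    intro ℓ hℓ
    rw [tau_eq_integral]
    have e : (fun θ => Real.cos ((ℓ : ℝ) * θ) * phiTestTilde d w₄ ω (2 * Real.cos θ))
        = fun θ => (2 * t * c) * (Real.cos ((ℓ : ℝ) * θ) * Real.cos (((1:ℕ) : ℝ) * θ))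
          + (B * Real.cos ((ℓ : ℝ) * θ)
            - Real.cos ((ℓ : ℝ) * θ) * Real.log (1 - 2 * t * Real.cos θ + t ^ 2)) := by
      funext θ
      rw [key θ]
      push_cast
      ring
    rw [e]
    have i1 : IntervalIntegrable
        (fun θ => (2 * t * c) * (Real.cos ((ℓ : ℝ) * θ) * Real.cos (((1:ℕ) : ℝ) * θ)))
        volume 0 π := ((by fun_prop : Continuous _)).intervalIntegrable 0 π
    have i2 : IntervalIntegrable (fun θ => B * Real.cos ((ℓ : ℝ) * θ)) volume 0 π :=
      ((by fun_prop : Continuous _)).intervalIntegrable 0 π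
    have i3 : IntervalIntegrable
        (fun θ => Real.cos ((ℓ : ℝ) * θ) * Real.log (1 - 2 * t * Real.cos θ + t ^ 2))
        volume 0 π :=
      (((by fun_prop : Continuous fun θ : ℝ => Real.cos ((ℓ : ℝ) * θ))).mul
        hlogcont).intervalIntegrable 0 π
    rw [intervalIntegral.integral_add i1 (i2.sub i3), intervalIntegral.integral_sub i2 i3,
      intervalIntegral.integral_const_mul, intervalIntegral.integral_const_mul,
      orth ℓ 1 hℓ le_rfl, logInt t ht0.le ht1 ℓ hℓ]
    have h0 : ∫ θ in (0:ℝ)..π, Real.cos ((ℓ : ℝ) * θ) = 0 := by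
      have := intCosInt (ℓ : ℤ) (by exact_mod_cast Nat.one_le_iff_ne_zero.1 hℓ)
      push_cast at this
      exact this
    rw [h0]
    by_cases h : ℓ = 1
    · subst h
      rw [if_pos rfl, if_pos rfl]
      field_simp
      ring
    · rw [if_neg h, if_neg h]
      field_simp
      ring
  have hτ1 : tau 1 (phiTestTilde d w₄ ω) = 2 * ω / (Real.sqrt d * (w₄ - 1)) := by
    rw [coef 1 le_rfl, if_pos rfl]
    rw [htdef, hcdef]
    field_simp
    ring
  refine ⟨hτ1, fun ℓ hℓ => ?_, ?_⟩
  · rw [coef ℓ (by omega), if_neg (by omega), zero_add, htdef]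
    ring
  · -- the series
    set a : ℝ := 2 * ω / (Real.sqrt d * (w₄ - 1)) with hadef
    have ha : a = 2 * t / (w₄ - 1) := by
      rw [hadef, htdef]; field_simp
    have ht2 : t ^ 2 < 1 := by nlinarith
    have h1t2 : 0 < 1 - t ^ 2 := by linarith
    -- HasSum for the log series at t^2
    have hbase := hasSum_log_cos (t ^ 2) 0 (by positivity) ht2
    have hsq2 : 1 - 2 * t ^ 2 * Real.cos 0 + (t ^ 2) ^ 2 = (1 - t ^ 2) ^ 2 := by
      rw [Real.cos_zero]; ring
    rw [hsq2, Real.log_pow] at hbase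
    have hg : HasSum (fun k : ℕ => (t ^ 2) ^ (k + 1) / (k + 1))
        (-Real.log (1 - t ^ 2)) := by
      have h := hbase.mul_left (1 / 2)
      have e2 : -Real.log (1 - t ^ 2) = (1 / 2) * -((2 : ℕ) * Real.log (1 - t ^ 2)) := by
        push_cast; ring
      rw [e2]
      exact h.congr_fun fun k => by
        rw [mul_zero, Real.cos_zero]
        push_cast
        ring
    have hfs : HasSum (fun k : ℕ => ((k : ℝ) + 1) * tau (k + 1) (phiTestTilde d w₄ ω) ^ 2)
        (-Real.log (1 - t ^ 2) + (a ^ 2 - t ^ 2)) := by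
      have h := hg.add (hasSum_ite_eq 0 (a ^ 2 - t ^ 2))
      refine h.congr_fun fun k => ?_
      match k with
      | 0 =>
        rw [if_pos rfl, hτ1]
        push_cast
        ring
      | (m + 1) =>
        rw [if_neg (by omega), add_zero]
        have h2 : tau (m + 2) (phiTestTilde d w₄ ω) = t ^ (m + 2) / ((m : ℝ) + 2) := by
          rw [coef (m + 2) (by omega), if_neg (by omega), zero_add]
          push_cast
          ring
        have h3 : tau (m + 1 + 1) (phiTestTilde d w₄ ω) = t ^ (m + 2) / ((m : ℝ) + 2) := by
          rw [show m + 1 + 1 = m + 2 from rfl]; exact h2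
        rw [h3]
        have h4 : ((m : ℝ) + 2) ≠ 0 := by positivity
        have h5 : (t ^ 2) ^ (m + 1 + 1) = (t ^ (m + 2)) ^ 2 := by
          rw [← pow_mul, ← pow_mul]; ring_nf
        push_cast
        rw [h5]
        field_simp
        ring
    have htsq : t ^ 2 = ω ^ 2 / d := by
      rw [htdef, div_pow, Real.sq_sqrt hd0.le]
    have ha2 : a ^ 2 = 4 * (ω ^ 2 / d) / (w₄ - 1) ^ 2 := by
      rw [ha, div_pow, ← htsq]; ring
    rw [hfs.tsum_eq, hτ1, ha2, htsq]
    generalize Real.log (1 - ω ^ 2 / d) = L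
    have hd0' : d ≠ 0 := hd0.ne'
    rw [hcdef]
    clear_value t c B a
    clear hfs hg hbase key hE hlogcont coef hτ1 hsq2 ht2 h1t2 htsq ha2 ha hadef hBdef hcdef htdef ht0 ht1
    field_simp
    ring

end
end
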